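/- For all integers m ≥ 1 and n ≥ 0, the following identity holds in ℤ[q]: Σ_{k=0}^{n} (−q)^{n−k} · (Π_{j=1}^{k} [jm]_q) · h_{n−k}([m−1]_q, [2m−1]_q, …, [(k+1)m−1]_q) = 1. (The k-th summand is (−q)^{n−k} times the ordered super q-Stirling number S̃^o[m,n,k] = [km]!_m · h_{n−k}([m−1]_q,…,[(k+1)m−1]_q).) -/

import Mathlib

/-!
Since `[jm]_q = 1 + q [jm-1]_q`, the identity is the case `x = q`, `a_j = [(j+1)m-1]_q` of
`∑_k (-x)^{n-k} ∏_{j<k} (1 + x a_j) h_{n-k}(a_0, …, a_k) = 1`, valid for any sequence in a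
commutative ring. Expanding `h_{e+1}(a_0, …, a_k) = h_{e+1}(a_0, …, a_{k-1}) + a_k h_e(a_0, …, a_k)`
and `-x a_k = 1 - (1 + x a_k)` splits the sum for `n + 1` into a telescoping sum plus the sum for `n`.
-/

open Finset

/-- Complete homogeneous symmetric polynomial evaluated at a list of ring elements. -/
def hpoly {R : Type*} [CommSemiring R] : ℕ → List R → R
  | 0, _ => 1
  | _ + 1, [] => 0
  | j + 1, a :: l => hpoly (j + 1) l + a * hpoly j (a :: l)
  termination_by j l => (j, l.length)

/-- The q-integer `[l]_q = 1 + q + … + q^{l-1}` in `ℤ[q]`. -/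
noncomputable def qint (l : ℕ) : Polynomial ℤ := ∑ i ∈ range l, Polynomial.X ^ i

section hpoly

variable {R : Type*}

theorem hpoly_zero [CommSemiring R] (l : List R) : hpoly 0 l = 1 := by
  simp [hpoly]

theorem hpoly_succ_nil [CommSemiring R] (j : ℕ) : hpoly (R := R) (j + 1) [] = 0 := by
  simp [hpoly]

theorem hpoly_succ_cons [CommSemiring R] (j : ℕ) (a : R) (l : List R) :
    hpoly (j + 1) (a :: l) = hpoly (j + 1) l + a * hpoly j (a :: l) := by
  rw [hpoly]

theorem hpoly_succ_append_singleton [CommRing R] (l : List R) (a : R) (j : ℕ) :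
    hpoly (j + 1) (l ++ [a]) = hpoly (j + 1) l + a * hpoly j (l ++ [a]) := by
  induction l generalizing j with
  | nil => rw [List.nil_append, hpoly_succ_cons, hpoly_succ_nil]
  | cons b l ih =>
    induction j with
    | zero =>
      simp only [List.cons_append, hpoly_succ_cons, hpoly_zero, ih]
      ring
    | succ i ihi =>
      simp only [List.cons_append] at ihi ⊢
      rw [hpoly_succ_cons, ih, hpoly_succ_cons (i + 1) b l]
      linear_combination (-a) * hpoly_succ_cons i b (l ++ [a]) + b * ihi

end hpoly

theorem sum_neg_pow_mul_prod_one_add_mul_hpoly {R : Type*} [CommRing R] (x : R) (a : ℕ → R)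
    (n : ℕ) :
    ∑ k ∈ range (n + 1), (-x) ^ (n - k) *
      ((∏ j ∈ range k, (1 + x * a j)) * hpoly (n - k) ((List.range (k + 1)).map a)) = 1 := by
  induction n with
  | zero => simp [hpoly_zero]
  | succ n ih =>
    set T : ℕ → R := fun k =>
      (-x) ^ (n + 1 - k) * ((∏ j ∈ range k, (1 + x * a j)) *
        hpoly (n + 1 - k) ((List.range k).map a)) with hT
    have step : ∀ k ∈ range (n + 1),
        (-x) ^ (n + 1 - k) * ((∏ j ∈ range k, (1 + x * a j)) *
          hpoly (n + 1 - k) ((List.range (k + 1)).map a))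
        = (T k - T (k + 1)) + (-x) ^ (n - k) * ((∏ j ∈ range k, (1 + x * a j)) *
          hpoly (n - k) ((List.range (k + 1)).map a)) := by
      intro k hk
      obtain ⟨e, rfl⟩ : ∃ e, n = k + e := Nat.exists_eq_add_of_le (mem_range_succ_iff.mp hk)
      simp only [hT, show k + e + 1 - k = e + 1 by omega, show k + e + 1 - (k + 1) = e by omega,
        show k + e - k = e by omega, List.range_succ, List.map_append, List.map_singleton,
        prod_range_succ, hpoly_succ_append_singleton, pow_succ]
      ring
    rw [sum_range_succ, sum_congr rfl step, sum_add_distrib, sum_range_sub', ih]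
    simp [hT, hpoly_zero, hpoly_succ_nil]

theorem qint_succ (l : ℕ) : qint (l + 1) = 1 + Polynomial.X * qint l := by
  rw [qint, geom_sum_succ, add_comm, qint]

/-- in `ℤ[q]`,
`Σ_{k=0}^{n} (−q)^{n−k} · (Π_{j=1}^{k} [jm]_q) · h_{n−k}([m−1]_q, [2m−1]_q, …, [(k+1)m−1]_q) = 1`,
i.e. the alternating sum of the ordered super q-Stirling numbers `S̃^o[m,n,k]` is `1`. -/
theorem stmt8 (m n : ℕ) (hm : 1 ≤ m) :
    ∑ k ∈ range (n + 1),
        (-(Polynomial.X : Polynomial ℤ)) ^ (n - k) *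
          ((∏ j ∈ range k, qint ((j + 1) * m)) *
            hpoly (n - k) ((List.range (k + 1)).map fun j => qint ((j + 1) * m - 1))) = 1 := by
  have hq (j : ℕ) : qint ((j + 1) * m) = 1 + Polynomial.X * qint ((j + 1) * m - 1) := by
    rw [← qint_succ, Nat.sub_add_cancel (Nat.one_le_iff_ne_zero.mpr (by positivity))]
  simp only [hq]
  exact sum_neg_pow_mul_prod_one_add_mul_hpoly _ _ n
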